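/- arXiv:0904.3300 — 2 statements merged into one kernel-verified Lean document; each statement's English description precedes it below -/
import Mathlib

section
/- With ω as above, ∫_{Δ^{2s}} dω equals (-1)^{u+v+1} · (a_0! ⋯ a_{2s}!)/((Σ a_j) + 2s - 1)! if a_u = 0 and a_v > 0; equals (-1)^{u+v} · (a_0! ⋯ a_{2s}!)/((Σ a_j) + 2s - 1)! if a_v = 0 and a_u > 0; and equals 0 if both a_u, a_v > 0 or both a_u = a_v = 0. -/
open MeasureTheory

/-- The integral over the standard `n`-simplex `Δⁿ` of the monomial top-degree form
`x_0^{a_0} ⋯ x_n^{a_n} dx_0 ∧ ⋯ ∧ \hat{dx_v} ∧ ⋯ ∧ dx_n`, computed by passing to the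
coordinates `(x_1, …, x_n)` (with `x_0 = 1 - Σ_{i ≥ 1} x_i`) over the region
`{x_i ≥ 0, Σ x_i ≤ 1}`, including the orientation sign `(-1)^v`. -/
noncomputable def monFormIntegral (n : ℕ) (a : Fin (n + 1) → ℕ) (v : Fin (n + 1)) : ℝ :=
  (-1 : ℝ) ^ (v : ℕ) *
    ∫ y in {y : Fin n → ℝ | (∀ i, 0 ≤ y i) ∧ ∑ i, y i ≤ 1},
      ((1 - ∑ i, y i) ^ (a 0) * ∏ i : Fin n, (y i) ^ (a i.succ))

/-! Each term of `dω` is a monomial top form, and the integral of `x^a` over `Δⁿ` is the Dirichlet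
integral `∏ a_j! / (|a| + n)!`: slice off the first coordinate `t ∈ [0, c]` of the corner simplex
`{y ≥ 0, Σ y ≤ c}`, use induction on the slice `{z ≥ 0, Σ z ≤ c - t}`, and finish with the Beta
integral `∫₀ᶜ t^p (c - t)^q dt = p! q! c^(p+q+1) / (p+q+1)!`. The coefficient `a_w` in front of
`x^(a - e_w)` turns `∏ (a - e_w)_j!` back into `∏ a_j!`, so each nonvanishing term of `∫ dω` is
`± ∏ a_j! / (|a| + 2s - 1)!`; when both are present their signs `(-1)^(u+v)` and `(-1)^(u+v+1)`
cancel. -/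

open Set

theorem integral_pow_mul_one_sub_pow (p q : ℕ) :
    ∫ t in (0 : ℝ)..1, t ^ p * (1 - t) ^ q =
      (p.factorial * q.factorial : ℝ) / (p + q + 1).factorial := by
  have hre : ∀ k : ℕ, 0 < ((k : ℂ) + 1).re := fun k => by
    simp only [Complex.add_re, Complex.natCast_re, Complex.one_re]
    positivity
  have hβ := Complex.Gamma_mul_Gamma_eq_betaIntegral (hre p) (hre q)
  rw [show (p + 1 + (q + 1) : ℂ) = ((p + q + 1 : ℕ) : ℂ) + 1 by push_cast; ring] at hβ
  simp only [Complex.Gamma_nat_eq_factorial, Complex.betaIntegral, add_sub_cancel_right,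
    Complex.cpow_natCast] at hβ
  have hf : ((p + q + 1).factorial : ℂ) ≠ 0 := by exact_mod_cast Nat.factorial_ne_zero _
  apply Complex.ofReal_injective
  rw [← intervalIntegral.integral_ofReal]
  push_cast
  rw [eq_div_iff hf, hβ]
  ring

theorem integral_pow_mul_sub_pow (p q : ℕ) (c : ℝ) :
    ∫ t in (0 : ℝ)..c, t ^ p * (c - t) ^ q =
      (p.factorial * q.factorial : ℝ) / (p + q + 1).factorial * c ^ (p + q + 1) := by
  have h := intervalIntegral.smul_integral_comp_mul_left (a := 0) (b := 1)
    (fun t => t ^ p * (c - t) ^ q) c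
  rw [mul_zero, mul_one] at h
  have hscale : ∀ x : ℝ, (c * x) ^ p * (c - c * x) ^ q = c ^ (p + q) * (x ^ p * (1 - x) ^ q) := by
    intro x
    rw [show c - c * x = c * (1 - x) by ring, mul_pow, mul_pow, pow_add]
    ring
  simp only [hscale, intervalIntegral.integral_const_mul, integral_pow_mul_one_sub_pow,
    smul_eq_mul] at h
  rw [← h]
  ring

theorem lintegral_fin_cons {n : ℕ} (g : (Fin (n + 1) → ℝ) → ENNReal) (hg : Measurable g) :
    ∫⁻ y, g y = ∫⁻ t, ∫⁻ z, g (Fin.cons t z) := by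
  have e := (volume_preserving_piFinSuccAbove (fun _ : Fin (n + 1) => ℝ) 0).symm
  rw [← e.lintegral_comp hg, Measure.volume_eq_prod, lintegral_prod]
  · simp [MeasurableEquiv.piFinSuccAbove_symm_apply, Fin.consEquiv]
  · exact (hg.comp e.measurable).aemeasurable

def cornerSimplex (n : ℕ) (c : ℝ) : Set (Fin n → ℝ) := {y | (∀ i, 0 ≤ y i) ∧ ∑ i, y i ≤ c}

theorem measurableSet_cornerSimplex (n : ℕ) (c : ℝ) : MeasurableSet (cornerSimplex n c) := by
  simp only [cornerSimplex, ofPred_and, ofPred_forall]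
  exact (MeasurableSet.iInter fun i => measurableSet_le measurable_const (measurable_pi_apply i))
    |>.inter (measurableSet_le (by fun_prop) measurable_const)

theorem cons_mem_cornerSimplex_iff {n : ℕ} {c t : ℝ} {z : Fin n → ℝ} :
    (Fin.cons t z : Fin (n + 1) → ℝ) ∈ cornerSimplex (n + 1) c ↔
      t ∈ Icc 0 c ∧ z ∈ cornerSimplex n (c - t) := by
  simp only [cornerSimplex, mem_ofPred_eq, Fin.forall_fin_succ, Fin.cons_zero, Fin.cons_succ,
    Fin.sum_cons, mem_Icc]
  constructor
  · rintro ⟨⟨ht, hz⟩, hsum⟩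
    have hz_sum : 0 ≤ ∑ i, z i := Finset.sum_nonneg fun i _ => hz i
    exact ⟨⟨ht, by linarith⟩, hz, by linarith⟩
  · rintro ⟨⟨ht, -⟩, hz, hsum⟩
    exact ⟨⟨ht, hz⟩, by linarith⟩

theorem setLIntegral_cornerSimplex_succ {n : ℕ} (c : ℝ) {f : (Fin (n + 1) → ℝ) → ENNReal}
    (hf : Measurable f) :
    ∫⁻ y in cornerSimplex (n + 1) c, f y =
      ∫⁻ t in Icc 0 c, ∫⁻ z in cornerSimplex n (c - t), f (Fin.cons t z) := by
  rw [← lintegral_indicator (measurableSet_cornerSimplex _ _),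
    lintegral_fin_cons _ (hf.indicator (measurableSet_cornerSimplex _ _)),
    ← lintegral_indicator measurableSet_Icc]
  congr 1 with t
  by_cases ht : t ∈ Icc 0 c
  · rw [indicator_of_mem ht, ← lintegral_indicator (measurableSet_cornerSimplex _ _)]
    congr 1 with z
    by_cases hz : z ∈ cornerSimplex n (c - t)
    · rw [indicator_of_mem hz, indicator_of_mem (cons_mem_cornerSimplex_iff.2 ⟨ht, hz⟩)]
    · rw [indicator_of_notMem hz,
        indicator_of_notMem fun h => hz (cons_mem_cornerSimplex_iff.1 h).2]
  · simp [cons_mem_cornerSimplex_iff, ht]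

theorem setLIntegral_cornerSimplex (n : ℕ) (b : Fin n → ℕ) (m : ℕ) {c : ℝ} (hc : 0 ≤ c) :
    ∫⁻ y in cornerSimplex n c, ENNReal.ofReal ((c - ∑ i, y i) ^ m * ∏ i, y i ^ b i) =
      ENNReal.ofReal (m.factorial * (∏ i, ((b i).factorial : ℝ)) / (m + ∑ i, b i + n).factorial *
        c ^ (m + ∑ i, b i + n)) := by
  induction n generalizing c with
  | zero =>
    have huniv : cornerSimplex 0 c = univ := by ext y; simp [cornerSimplex, hc]
    have hm : (m.factorial : ℝ) ≠ 0 := by positivity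
    simp [huniv, hm, volume_pi]
  | succ n ih =>
    set N := m + ∑ i, b (Fin.succ i) + n
    set K : ℝ := m.factorial * (∏ i, ((b (Fin.succ i)).factorial : ℝ)) / N.factorial with hK
    have hslice : ∀ t ∈ Icc 0 c,
        ∫⁻ z in cornerSimplex n (c - t),
          ENNReal.ofReal ((c - ∑ i, (Fin.cons t z : Fin (n + 1) → ℝ) i) ^ m *
            ∏ i, (Fin.cons t z : Fin (n + 1) → ℝ) i ^ b i) =
        ENNReal.ofReal (K * (t ^ b 0 * (c - t) ^ N)) := by
      rintro t ⟨ht0, htc⟩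
      have hsplit : ∀ z : Fin n → ℝ,
          ENNReal.ofReal ((c - ∑ i, (Fin.cons t z : Fin (n + 1) → ℝ) i) ^ m *
            ∏ i, (Fin.cons t z : Fin (n + 1) → ℝ) i ^ b i) =
          ENNReal.ofReal (t ^ b 0) *
            ENNReal.ofReal ((c - t - ∑ i, z i) ^ m * ∏ i, z i ^ b (Fin.succ i)) := by
        intro z
        rw [← ENNReal.ofReal_mul (by positivity), Fin.sum_cons, Fin.prod_univ_succ]
        simp only [Fin.cons_zero, Fin.cons_succ]
        ring_nf
      simp_rw [hsplit]
      rw [lintegral_const_mul _ (by fun_prop), ih _ (sub_nonneg.2 htc),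
        ← ENNReal.ofReal_mul (by positivity)]
      congr 1
      ring
    rw [setLIntegral_cornerSimplex_succ c (by fun_prop),
      setLIntegral_congr_fun measurableSet_Icc hslice, ← ofReal_integral_eq_lintegral_ofReal]
    · rw [integral_Icc_eq_integral_Ioc, ← intervalIntegral.integral_of_le hc,
        intervalIntegral.integral_const_mul, integral_pow_mul_sub_pow, Fin.prod_univ_succ,
        Fin.sum_univ_succ, show m + (b 0 + ∑ i, b (Fin.succ i)) + (n + 1) = b 0 + N + 1 by omega]
      congr 1
      rw [hK]
      field_simp
    · exact (by fun_prop : Continuous _).integrableOn_Icc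
    · refine ae_restrict_of_forall_mem measurableSet_Icc fun t ⟨ht0, htc⟩ => ?_
      have := sub_nonneg.2 htc
      positivity

theorem mul_prod_factorial_update_sub_one {ι : Type*} [Fintype ι] [DecidableEq ι]
    (a : ι → ℕ) {w : ι} (hw : 0 < a w) :
    a w * ∏ j, (Function.update a w (a w - 1) j).factorial = ∏ j, (a j).factorial := by
  rw [← Finset.mul_prod_erase _ _ (Finset.mem_univ w),
    ← Finset.mul_prod_erase _ _ (Finset.mem_univ w), Function.update_self, ← mul_assoc, Nat.mul_factorial_pred hw.ne']
  congr 1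
  exact Finset.prod_congr rfl fun j hj => by rw [Function.update_of_ne (Finset.ne_of_mem_erase hj)]

theorem sum_update_sub_one_add_one {ι : Type*} [Fintype ι] [DecidableEq ι]
    (a : ι → ℕ) {w : ι} (hw : 0 < a w) :
    ∑ j, Function.update a w (a w - 1) j + 1 = ∑ j, a j := by
  rw [Finset.sum_update_of_mem (Finset.mem_univ w), ← Finset.add_sum_erase _ _ (Finset.mem_univ w),
    Finset.sdiff_singleton_eq_erase]
  omega

theorem setIntegral_cornerSimplex_one (n : ℕ) (a : Fin (n + 1) → ℕ) :
    ∫ y in cornerSimplex n 1, (1 - ∑ i, y i) ^ a 0 * ∏ i, y i ^ a i.succ =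
      (∏ j, (a j).factorial : ℕ) / ((∑ j, a j + n).factorial : ℕ) := by
  have hnonneg : 0 ≤ᵐ[volume.restrict (cornerSimplex n 1)]
      fun y : Fin n → ℝ => (1 - ∑ i, y i) ^ a 0 * ∏ i, y i ^ a i.succ :=
    ae_restrict_of_forall_mem (measurableSet_cornerSimplex n 1) fun y ⟨hy, hsum⟩ =>
      mul_nonneg (pow_nonneg (sub_nonneg.2 hsum) _)
        (Finset.prod_nonneg fun i _ => pow_nonneg (hy i) _)
  rw [integral_eq_lintegral_of_nonneg_ae hnonneg (by fun_prop),
    setLIntegral_cornerSimplex n (fun i => a i.succ) (a 0) zero_le_one,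
    ENNReal.toReal_ofReal (by positivity), one_pow, mul_one, Fin.prod_univ_succ, Fin.sum_univ_succ]
  push_cast
  ring

theorem natCast_mul_monFormIntegral_update_sub_one {n : ℕ} (a : Fin (n + 1) → ℕ)
    {w : Fin (n + 1)} (hw : 0 < a w) (v : Fin (n + 1)) :
    (a w : ℝ) * monFormIntegral n (Function.update a w (a w - 1)) v =
      (-1) ^ (v : ℕ) * (∏ j, (a j).factorial : ℕ) / ((∑ j, a j + n - 1).factorial : ℕ) := by
  rw [monFormIntegral, ← cornerSimplex, setIntegral_cornerSimplex_one,
    ← mul_prod_factorial_update_sub_one a hw, ← sum_update_sub_one_add_one a hw,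
    Nat.add_right_comm, Nat.add_sub_cancel]
  push_cast
  ring

theorem integral_d_monomial_form_general (s : ℕ) (hs : 1 ≤ s) (a : Fin (2 * s + 1) → ℕ)
    (u v : Fin (2 * s + 1)) :
    (-1 : ℝ) ^ (u : ℕ) * (a u : ℝ) * monFormIntegral (2 * s)
        (Function.update a u (a u - 1)) v +
      (-1 : ℝ) ^ ((v : ℕ) + 1) * (a v : ℝ) * monFormIntegral (2 * s)
        (Function.update a v (a v - 1)) u =
    (if a u = 0 ∧ a v = 0 then 0
     else if a u = 0 then
       (-1 : ℝ) ^ ((u : ℕ) + (v : ℕ) + 1) * ((∏ j, Nat.factorial (a j) : ℕ) : ℝ) /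
         ((Nat.factorial ((∑ j, a j) + (2 * s - 1)) : ℕ) : ℝ)
     else if a v = 0 then
       (-1 : ℝ) ^ ((u : ℕ) + (v : ℕ)) * ((∏ j, Nat.factorial (a j) : ℕ) : ℝ) /
         ((Nat.factorial ((∑ j, a j) + (2 * s - 1)) : ℕ) : ℝ)
     else 0) := by
  set P : ℝ := ((∏ j, (a j).factorial : ℕ) : ℝ)
  set F : ℝ := ((((∑ j, a j) + (2 * s - 1)).factorial : ℕ) : ℝ)
  have hterm : ∀ w x : Fin (2 * s + 1), 0 < a w →
      (a w : ℝ) * monFormIntegral (2 * s) (Function.update a w (a w - 1)) x =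
        (-1) ^ (x : ℕ) * P / F :=
    fun w x hw => by
      rw [natCast_mul_monFormIntegral_update_sub_one a hw, Nat.add_sub_assoc (by omega)]
  rcases Nat.eq_zero_or_pos (a u) with hu | hu <;> rcases Nat.eq_zero_or_pos (a v) with hv | hv
  · simp [hu, hv]
  · rw [if_neg (by omega), if_pos hu, hu, Nat.cast_zero, mul_zero, zero_mul, zero_add, mul_assoc,
      hterm v u hv]
    ring
  · rw [if_neg (by omega), if_neg (by omega), if_pos hv, hv, Nat.cast_zero, mul_zero, zero_mul,
      add_zero, mul_assoc, hterm u v hu]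
    ring
  · rw [if_neg (by omega), if_neg (by omega), if_neg (by omega), mul_assoc, mul_assoc, hterm u v hu,
      hterm v u hv]
    ring

/-- For the monomial `(2s-1)`-form
`ω = x_0^{a_0} ⋯ x_{2s}^{a_{2s}} dx_0 ∧ ⋯ ∧ \hat{dx_u} ∧ ⋯ ∧ \hat{dx_v} ∧ ⋯ ∧ dx_{2s}`
on `Δ^{2s}` (with `0 ≤ u < v ≤ 2s`), the integral `∫_{Δ^{2s}} dω`, where
`dω = (-1)^u a_u x^{a - e_u} dx_0 ∧ ⋯ ∧ \hat{dx_v} ∧ ⋯ + (-1)^{v+1} a_v x^{a - e_v}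
dx_0 ∧ ⋯ ∧ \hat{dx_u} ∧ ⋯`, equals: `(-1)^{u+v+1} (a_0! ⋯ a_{2s}!)/((Σ a_j) + 2s - 1)!` if
`a_u = 0, a_v > 0`; `(-1)^{u+v} (a_0! ⋯ a_{2s}!)/((Σ a_j) + 2s - 1)!` if `a_v = 0, a_u > 0`;
and `0` if both `a_u, a_v > 0` or both are `0`. -/
theorem integral_d_monomial_form (s : ℕ) (hs : 1 ≤ s) (a : Fin (2 * s + 1) → ℕ)
    (u v : Fin (2 * s + 1)) (huv : u < v) :
    (-1 : ℝ) ^ (u : ℕ) * (a u : ℝ) * monFormIntegral (2 * s)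
        (Function.update a u (a u - 1)) v +
      (-1 : ℝ) ^ ((v : ℕ) + 1) * (a v : ℝ) * monFormIntegral (2 * s)
        (Function.update a v (a v - 1)) u =
    (if a u = 0 ∧ a v = 0 then 0
     else if a u = 0 then
       (-1 : ℝ) ^ ((u : ℕ) + (v : ℕ) + 1) * ((∏ j, Nat.factorial (a j) : ℕ) : ℝ) /
         ((Nat.factorial ((∑ j, a j) + (2 * s - 1)) : ℕ) : ℝ)
     else if a v = 0 then
       (-1 : ℝ) ^ ((u : ℕ) + (v : ℕ)) * ((∏ j, Nat.factorial (a j) : ℕ) : ℝ) /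
         ((Nat.factorial ((∑ j, a j) + (2 * s - 1)) : ℕ) : ℝ)
     else 0) :=
  integral_d_monomial_form_general s hs a u v
end

section
/- For a finite group G and a ℤ[G]-module M, the first homology H_1(G; M) is isomorphic to the kernel of the map ℤ ⊗_{ℤ[G]} (IG ⊗ M) → M sending 1 ⊗ (g-1) ⊗ m to (g^{-1} - 1)m, where IG is the augmentation ideal and G acts diagonally on IG ⊗ M. -/
/-- The augmentation ideal `IG = ker(ℤ[G] → ℤ)` of the integral group ring. -/
noncomputable def augIdeal (G : Type*) [Group G] : Ideal (MonoidAlgebra ℤ G) :=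
  RingHom.ker (MonoidAlgebra.lift ℤ ℤ G 1).toRingHom

/-- The antipode `Σ c_g g ↦ Σ c_g g⁻¹` of the group ring. -/
noncomputable def antipode {G : Type*} [Group G] (a : MonoidAlgebra ℤ G) : MonoidAlgebra ℤ G :=
  MonoidAlgebra.mapDomain (fun g : G => g⁻¹) a

/-- First differential `M ⊗_{ℤ[G]} ℤ[G] → M` of the inhomogeneous bar complex:
`(g ⊗ m) ↦ (g⁻¹ - 1)·m`. -/
noncomputable def barD1 (G : Type*) [Group G] (M : Type*) [AddCommGroup M]
    [Module (MonoidAlgebra ℤ G) M] : (G →₀ M) →+ M :=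
  Finsupp.liftAddHom fun g =>
    AddMonoidHom.mk' (fun m => (MonoidAlgebra.of ℤ G g⁻¹) • m - m)
      (by intro a b; rw [smul_add]; abel)

/-- Second differential of the inhomogeneous bar complex:
`((g,h) ⊗ m) ↦ h ⊗ g⁻¹m - gh ⊗ m + g ⊗ m`. -/
noncomputable def barD2 (G : Type*) [Group G] (M : Type*) [AddCommGroup M]
    [Module (MonoidAlgebra ℤ G) M] : ((G × G) →₀ M) →+ (G →₀ M) :=
  Finsupp.liftAddHom fun gh =>
    AddMonoidHom.mk'
      (fun m => Finsupp.single gh.2 ((MonoidAlgebra.of ℤ G gh.1⁻¹) • m) -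
        Finsupp.single (gh.1 * gh.2) m + Finsupp.single gh.1 m)
      (by
        intro a b
        rw [smul_add, Finsupp.single_add, Finsupp.single_add, Finsupp.single_add]
        abel)

/-- The relations defining the coinvariants `ℤ ⊗_{ℤ[G]} (IG ⊗ M)` of the diagonal action:
`g·x - x` for `x = a ⊗ m` a pure tensor, `g·(a ⊗ m) = (ga) ⊗ (gm)`. -/
noncomputable def coinvRel (G : Type*) [Group G] (M : Type*) [AddCommGroup M]
    [Module (MonoidAlgebra ℤ G) M] :
    AddSubgroup (TensorProduct ℤ (↥(augIdeal G)) M) :=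
  AddSubgroup.closure
    {t | ∃ (g : G) (a : ↥(augIdeal G)) (m : M),
      t = (⟨MonoidAlgebra.of ℤ G g * (a : MonoidAlgebra ℤ G),
            Ideal.mul_mem_left _ _ a.2⟩ : ↥(augIdeal G)) ⊗ₜ[ℤ]
          ((MonoidAlgebra.of ℤ G g) • m) - (a : ↥(augIdeal G)) ⊗ₜ[ℤ] m}

/-!
Send the 1-chain `[g | m]` to the class of `(g - 1) ⊗ m` in the coinvariants of `IG ⊗ M`.
This map is onto because the `g - 1` span `IG` over `ℤ`, and it kills boundaries because
`g(h - 1) = (gh - 1) - (g - 1)`. Composed with `Ψ` it is `d₁`, since `S(g - 1) = g⁻¹ - 1`.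
Conversely, `a ⊗ m ↦ Σ_g a(g) [g | m]` is invariant under the diagonal action modulo
boundaries, by the relations `[gh | gm] = [h | m] + [g | gm]` and `[1 | m] = 0`, so it descends
to the coinvariants and inverts the first map there. Hence chains modulo boundaries are the
coinvariants, and restricting to cycles gives `H₁(G; M) ≅ ker Ψ`.
-/

open scoped MonoidAlgebra
open MonoidAlgebra (of single)

theorem AddMonoidHom.nonempty_quotient_ker_comp_equiv_ker {A B C : Type*} [AddCommGroup A]
    [AddGroup B] [AddGroup C] (φ : A →+ B) (hφ : Function.Surjective φ) (Ψ : B →+ C) :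
    Nonempty ((Ψ.comp φ).ker ⧸ φ.ker.addSubgroupOf (Ψ.comp φ).ker ≃+ Ψ.ker) := by
  let f : (Ψ.comp φ).ker →+ Ψ.ker :=
    (φ.comp (Ψ.comp φ).ker.subtype).codRestrict Ψ.ker fun x => x.2
  have hf : Function.Surjective f := by
    rintro ⟨b, hb⟩
    obtain ⟨a, rfl⟩ := hφ b
    exact ⟨⟨a, hb⟩, rfl⟩
  have hker : f.ker = φ.ker.addSubgroupOf (Ψ.comp φ).ker := by
    ext x
    rw [AddMonoidHom.mem_ker, AddSubgroup.mem_addSubgroupOf, AddMonoidHom.mem_ker,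
      ← ZeroMemClass.coe_eq_zero]
    rfl
  exact ⟨hker ▸ QuotientAddGroup.quotientKerEquivOfSurjective f hf⟩

namespace augIdeal

variable {G : Type*} [Group G]

noncomputable def subOne (g : G) : augIdeal G :=
  ⟨of ℤ G g - 1, by simp [augIdeal, RingHom.mem_ker]⟩

lemma coe_subOne (g : G) : (subOne g : ℤ[G]) = of ℤ G g - 1 := rfl

lemma augmentation_eq_zero (a : augIdeal G) : MonoidAlgebra.lift ℤ ℤ G 1 a = 0 := a.2

lemma eq_sum_smul_subOne (a : augIdeal G) :
    a = (a : ℤ[G]).coeff.sum fun g c => c • subOne g := by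
  have hε : ∑ g ∈ (a : ℤ[G]).coeff.support, (a : ℤ[G]).coeff g = 0 := by
    simpa [MonoidAlgebra.lift_apply, Finsupp.sum] using augmentation_eq_zero a
  apply Subtype.ext
  simp only [Finsupp.sum, AddSubmonoidClass.coe_finsetSum, SetLike.val_smul_of_tower, coe_subOne,
    MonoidAlgebra.of_apply, smul_sub, MonoidAlgebra.smul_single, mul_one, zsmul_eq_mul,
    Finset.sum_sub_distrib, ← Int.cast_sum, hε, Int.cast_zero, sub_zero]
  exact (MonoidAlgebra.sum_coeff_single _).symm

lemma antipode_subOne (g : G) : antipode (subOne g : ℤ[G]) = of ℤ G g⁻¹ - 1 := by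
  change MonoidAlgebra.mapDomainAddEquiv ℤ (Equiv.inv G) (of ℤ G g - 1) = _
  simp [MonoidAlgebra.mapDomainAddEquiv_single, MonoidAlgebra.one_def]

lemma smul_subOne (g h : G) : of ℤ G g • subOne h = subOne (g * h) - subOne g := by
  apply Subtype.ext
  simp [coe_subOne, mul_sub]

end augIdeal

section BarComplex

variable (G : Type*) [Group G] (M : Type*) [AddCommGroup M] [Module ℤ[G] M]

open augIdeal

lemma barD1_single (g : G) (m : M) :
    barD1 G M (Finsupp.single g m) = of ℤ G g⁻¹ • m - m :=
  Finsupp.liftAddHom_apply_single _ _ _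

lemma barD2_single (g h : G) (m : M) :
    barD2 G M (Finsupp.single (g, h) m) =
      Finsupp.single h (of ℤ G g⁻¹ • m) - Finsupp.single (g * h) m + Finsupp.single g m :=
  Finsupp.liftAddHom_apply_single _ _ _

variable {G M} in
lemma mk_single_one_eq_zero (m : M) :
    (QuotientAddGroup.mk (Finsupp.single 1 m) : (G →₀ M) ⧸ (barD2 G M).range) = 0 := by
  rw [QuotientAddGroup.eq_zero_iff]
  refine ⟨Finsupp.single (1, 1) m, ?_⟩
  rw [barD2_single, inv_one, map_one, one_smul, one_mul, sub_add_cancel]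

variable {G M} in
lemma mk_single_mul_smul (g h : G) (m : M) :
    (QuotientAddGroup.mk (Finsupp.single (g * h) (of ℤ G g • m)) :
      (G →₀ M) ⧸ (barD2 G M).range) =
      QuotientAddGroup.mk (Finsupp.single h m) +
        QuotientAddGroup.mk (Finsupp.single g (of ℤ G g • m)) := by
  rw [← QuotientAddGroup.mk_add, eq_comm, QuotientAddGroup.eq_iff_sub_mem]
  refine ⟨Finsupp.single (g, h) (of ℤ G g • m), ?_⟩
  rw [barD2_single, smul_smul, ← map_mul, inv_mul_cancel, map_one, one_smul]
  abel

variable {G M} in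
lemma mk_smul_tmul_smul (g : G) (a : augIdeal G) (m : M) :
    (QuotientAddGroup.mk ((of ℤ G g • a) ⊗ₜ[ℤ] (of ℤ G g • m)) :
      TensorProduct ℤ (augIdeal G) M ⧸ coinvRel G M) = QuotientAddGroup.mk (a ⊗ₜ[ℤ] m) :=
  QuotientAddGroup.eq_iff_sub_mem.2 (AddSubgroup.subset_closure ⟨g, a, m, rfl⟩)

noncomputable def barToCoinv : (G →₀ M) →+ TensorProduct ℤ (augIdeal G) M ⧸ coinvRel G M :=
  Finsupp.liftAddHom fun g =>
    (QuotientAddGroup.mk' _).comp (TensorProduct.mk ℤ (augIdeal G) M (subOne g)).toAddMonoidHom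

variable {G M} in
lemma barToCoinv_single (g : G) (m : M) :
    barToCoinv G M (Finsupp.single g m) = QuotientAddGroup.mk (subOne g ⊗ₜ[ℤ] m) :=
  Finsupp.liftAddHom_apply_single _ _ _

lemma comp_barToCoinv_eq_barD1 (Ψ : (TensorProduct ℤ (augIdeal G) M ⧸ coinvRel G M) →+ M)
    (hΨ : ∀ (a : augIdeal G) (m : M),
      Ψ (QuotientAddGroup.mk (a ⊗ₜ[ℤ] m)) = antipode (a : ℤ[G]) • m) :
    Ψ.comp (barToCoinv G M) = barD1 G M := by
  refine Finsupp.addHom_ext fun g m => ?_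
  rw [AddMonoidHom.comp_apply, barToCoinv_single, hΨ, antipode_subOne, barD1_single, sub_smul,
    one_smul]

lemma barToCoinv_comp_barD2 : (barToCoinv G M).comp (barD2 G M) = 0 := by
  refine Finsupp.addHom_ext fun ⟨g, h⟩ m => ?_
  have hm : of ℤ G g • of ℤ G g⁻¹ • m = m := by
    rw [smul_smul, ← map_mul, mul_inv_cancel, map_one, one_smul]
  simp only [AddMonoidHom.comp_apply, barD2_single, map_add, map_sub, barToCoinv_single,
    AddMonoidHom.zero_apply]
  rw [← mk_smul_tmul_smul g, smul_subOne, hm, TensorProduct.sub_tmul, QuotientAddGroup.mk_sub]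
  abel

lemma barToCoinv_surjective : Function.Surjective (barToCoinv G M) := by
  have hgen (a : augIdeal G) (m : M) :
      QuotientAddGroup.mk (a ⊗ₜ[ℤ] m) ∈ (barToCoinv G M).range := by
    rw [eq_sum_smul_subOne a, Finsupp.sum, TensorProduct.sum_tmul, QuotientAddGroup.mk_sum]
    refine AddSubgroup.sum_mem _ fun g _ => ?_
    rw [← TensorProduct.smul_tmul', QuotientAddGroup.mk_zsmul]
    exact AddSubgroup.zsmul_mem _
      (AddMonoidHom.mem_range.2 ⟨Finsupp.single g m, barToCoinv_single g m⟩) _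
  rw [← AddMonoidHom.range_eq_top, eq_top_iff]
  rintro x -
  obtain ⟨t, rfl⟩ := QuotientAddGroup.mk_surjective x
  induction t using TensorProduct.induction_on with
  | zero => exact zero_mem _
  | tmul a m => exact hgen a m
  | add x y hx hy => exact add_mem hx hy

/-- `x ↦ (m ↦ Σ_g x(g) [g | m])`, with values in chains modulo boundaries. -/
noncomputable def barClass : ℤ[G] →+ M →+ (G →₀ M) ⧸ (barD2 G M).range :=
  (Finsupp.liftAddHom fun g =>
    zmultiplesHom (M →+ (G →₀ M) ⧸ (barD2 G M).range)
      ((QuotientAddGroup.mk' _).comp (Finsupp.singleAddHom g))).comp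
    MonoidAlgebra.coeffAddEquiv.toAddMonoidHom

variable {G M} in
lemma barClass_single (g : G) (c : ℤ) (m : M) :
    barClass G M (single g c) m = c • QuotientAddGroup.mk (Finsupp.single g m) := by
  simp [barClass]

variable {G M} in
lemma barClass_subOne (g : G) (m : M) :
    barClass G M (subOne g) m = QuotientAddGroup.mk (Finsupp.single g m) := by
  rw [coe_subOne, MonoidAlgebra.of_apply, MonoidAlgebra.one_def, map_sub, AddMonoidHom.sub_apply,
    barClass_single, barClass_single, mk_single_one_eq_zero, one_smul, one_smul, sub_zero]

variable {G M} in
lemma barClass_of_mul_smul (g : G) (x : ℤ[G]) (m : M) :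
    barClass G M (of ℤ G g * x) (of ℤ G g • m) =
      barClass G M x m +
        MonoidAlgebra.lift ℤ ℤ G 1 x • QuotientAddGroup.mk (Finsupp.single g (of ℤ G g • m)) := by
  induction x using MonoidAlgebra.induction_linear with
  | zero => simp
  | add x y hx hy =>
    rw [mul_add, map_add, AddMonoidHom.add_apply, hx, hy, map_add, AddMonoidHom.add_apply, map_add,
      add_zsmul]
    abel
  | single h c =>
    have hgh : of ℤ G g * single h c = single (g * h) c := by
      rw [MonoidAlgebra.of_apply, MonoidAlgebra.single_mul_single, one_mul]
    rw [hgh, barClass_single, barClass_single, mk_single_mul_smul, MonoidAlgebra.lift_single,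
      zsmul_add, MonoidHom.one_apply, smul_eq_mul, mul_one]

noncomputable def coinvToBarQuot :
    TensorProduct ℤ (augIdeal G) M ⧸ coinvRel G M →+ (G →₀ M) ⧸ (barD2 G M).range :=
  QuotientAddGroup.lift (coinvRel G M)
    (TensorProduct.liftAddHom ((barClass G M).comp (augIdeal G).subtype.toAddMonoidHom)
      fun c a m => by simp [map_zsmul])
    (by
      rw [coinvRel, AddSubgroup.closure_le]
      rintro _ ⟨g, a, m, rfl⟩
      rw [SetLike.mem_coe, AddMonoidHom.mem_ker, map_sub, TensorProduct.liftAddHom_tmul,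
        TensorProduct.liftAddHom_tmul, sub_eq_zero]
      exact (barClass_of_mul_smul g a m).trans <| by
        rw [augmentation_eq_zero, zero_zsmul, add_zero]
        rfl)

lemma coinvToBarQuot_comp_barToCoinv :
    (coinvToBarQuot G M).comp (barToCoinv G M) = QuotientAddGroup.mk' (barD2 G M).range :=
  Finsupp.addHom_ext fun g m => by
    rw [AddMonoidHom.comp_apply, barToCoinv_single, coinvToBarQuot, QuotientAddGroup.lift_mk,
      TensorProduct.liftAddHom_tmul]
    exact barClass_subOne g m

lemma ker_barToCoinv : (barToCoinv G M).ker = (barD2 G M).range := by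
  refine le_antisymm (fun y hy => ?_)
    ((AddMonoidHom.range_le_ker_iff _ _).2 (barToCoinv_comp_barD2 G M))
  have hy' := congr($(coinvToBarQuot_comp_barToCoinv G M) y)
  rwa [AddMonoidHom.comp_apply, hy, map_zero, eq_comm, QuotientAddGroup.mk'_apply,
    QuotientAddGroup.eq_zero_iff] at hy'

end BarComplex

theorem h1_iso_ker_coinv_map_general (G : Type*) [Group G] (M : Type*) [AddCommGroup M]
    [Module (MonoidAlgebra ℤ G) M]
    (Ψ : (TensorProduct ℤ (↥(augIdeal G)) M ⧸ coinvRel G M) →+ M)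
    (hΨ : ∀ (a : ↥(augIdeal G)) (m : M),
      Ψ (QuotientAddGroup.mk (a ⊗ₜ[ℤ] m)) = antipode (a : MonoidAlgebra ℤ G) • m) :
    Nonempty
      (((barD1 G M).ker ⧸ ((barD2 G M).range.addSubgroupOf (barD1 G M).ker)) ≃+ ↥Ψ.ker) := by
  rw [← comp_barToCoinv_eq_barD1 G M Ψ hΨ, ← ker_barToCoinv]
  exact AddMonoidHom.nonempty_quotient_ker_comp_equiv_ker _ (barToCoinv_surjective G M) Ψ

/-- For a finite group `G` and a `ℤ[G]`-module `M`, the first homology `H_1(G; M)` (the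
middle homology `ker d₁ / im d₂` of the inhomogeneous bar complex) is isomorphic to the
kernel of the map `ℤ ⊗_{ℤ[G]} (IG ⊗ M) → M` sending `1 ⊗ (g - 1) ⊗ m` to `(g⁻¹ - 1)·m`
(equivalently, `1 ⊗ a ⊗ m ↦ S(a)·m` with `S` the antipode), where `IG` is the augmentation
ideal and `G` acts diagonally on `IG ⊗ M`. -/
theorem h1_iso_ker_coinv_map (G : Type*) [Group G] [Finite G] (M : Type*) [AddCommGroup M]
    [Module (MonoidAlgebra ℤ G) M]
    (Ψ : (TensorProduct ℤ (↥(augIdeal G)) M ⧸ coinvRel G M) →+ M)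
    (hΨ : ∀ (a : ↥(augIdeal G)) (m : M),
      Ψ (QuotientAddGroup.mk (a ⊗ₜ[ℤ] m)) = antipode (a : MonoidAlgebra ℤ G) • m) :
    Nonempty
      (((barD1 G M).ker ⧸ ((barD2 G M).range.addSubgroupOf (barD1 G M).ker)) ≃+ ↥Ψ.ker) :=
  h1_iso_ker_coinv_map_general G M Ψ hΨ
end
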